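/- The ambiguity premium (x,ε) ↦ Δ_ε(x) = ψ^p_ε(x) − ψ^o_ε(x) is upper semicontinuous on X × [0,∞): for every sequence (x_k, ε_k) → (x, ε) in X × [0,∞), limsup_k Δ_{ε_k}(x_k) ≤ Δ_ε(x). -/

import Mathlib

open Set Metric Filter Topology

/-- Lower-level value function `φ(x) := min_{v ∈ Y} f(x,v)`. -/
noncomputable def phi {n m : ℕ} (f : EuclideanSpace ℝ (Fin n) → EuclideanSpace ℝ (Fin m) → ℝ)
    (Y : Set (EuclideanSpace ℝ (Fin m))) (x : EuclideanSpace ℝ (Fin n)) : ℝ :=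
  sInf (f x '' Y)

/-- Exact lower-level solution set `S(x) := {y ∈ Y : f(x,y) = φ(x)}`. -/
noncomputable def Sexact {n m : ℕ} (f : EuclideanSpace ℝ (Fin n) → EuclideanSpace ℝ (Fin m) → ℝ)
    (Y : Set (EuclideanSpace ℝ (Fin m))) (x : EuclideanSpace ℝ (Fin n)) :
    Set (EuclideanSpace ℝ (Fin m)) :=
  {y ∈ Y | f x y = phi f Y x}

/-- The ε-optimal response set `S_ε(x) := {y ∈ Y : f(x,y) ≤ φ(x) + ε}`. -/
noncomputable def Seps {n m : ℕ} (f : EuclideanSpace ℝ (Fin n) → EuclideanSpace ℝ (Fin m) → ℝ)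
    (Y : Set (EuclideanSpace ℝ (Fin m))) (ε : ℝ) (x : EuclideanSpace ℝ (Fin n)) :
    Set (EuclideanSpace ℝ (Fin m)) :=
  {y ∈ Y | f x y ≤ phi f Y x + ε}

/-- Optimistic leader value `ψ^o_ε(x) := min_{y ∈ S_ε(x)} F(x,y)`. -/
noncomputable def psiO {n m : ℕ}
    (F f : EuclideanSpace ℝ (Fin n) → EuclideanSpace ℝ (Fin m) → ℝ)
    (Y : Set (EuclideanSpace ℝ (Fin m))) (ε : ℝ) (x : EuclideanSpace ℝ (Fin n)) : ℝ :=
  sInf (F x '' Seps f Y ε x)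

/-- Pessimistic leader value `ψ^p_ε(x) := max_{y ∈ S_ε(x)} F(x,y)`. -/
noncomputable def psiP {n m : ℕ}
    (F f : EuclideanSpace ℝ (Fin n) → EuclideanSpace ℝ (Fin m) → ℝ)
    (Y : Set (EuclideanSpace ℝ (Fin m))) (ε : ℝ) (x : EuclideanSpace ℝ (Fin n)) : ℝ :=
  sSup (F x '' Seps f Y ε x)

/-- Ambiguity premium `Δ_ε(x) := ψ^p_ε(x) − ψ^o_ε(x)`. -/
noncomputable def Delta {n m : ℕ}
    (F f : EuclideanSpace ℝ (Fin n) → EuclideanSpace ℝ (Fin m) → ℝ)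
    (Y : Set (EuclideanSpace ℝ (Fin m))) (ε : ℝ) (x : EuclideanSpace ℝ (Fin n)) : ℝ :=
  psiP F f Y ε x - psiO F f Y ε x

section Aux

variable {n m : ℕ} {Y : Set (EuclideanSpace ℝ (Fin m))}
  {F f : EuclideanSpace ℝ (Fin n) → EuclideanSpace ℝ (Fin m) → ℝ}

lemma phi_continuous (hY : IsCompact Y)
    (hf : Continuous fun p : EuclideanSpace ℝ (Fin n) × EuclideanSpace ℝ (Fin m) => f p.1 p.2) :
    Continuous (phi f Y) :=
  hY.continuous_sInf hf

lemma Seps_subset (x : EuclideanSpace ℝ (Fin n)) (ε : ℝ) : Seps f Y ε x ⊆ Y :=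
  fun _ hy => hy.1

lemma Seps_nonempty (hYne : Y.Nonempty) (hY : IsCompact Y)
    (hf : Continuous fun p : EuclideanSpace ℝ (Fin n) × EuclideanSpace ℝ (Fin m) => f p.1 p.2)
    (x : EuclideanSpace ℝ (Fin n)) {ε : ℝ} (hε : 0 ≤ ε) : (Seps f Y ε x).Nonempty := by
  have hcx : Continuous (f x) := hf.comp (Continuous.prodMk_right x)
  obtain ⟨y0, hy0Y, hy0⟩ := hY.exists_isMinOn hYne hcx.continuousOn
  refine ⟨y0, hy0Y, ?_⟩
  have : phi f Y x = f x y0 := by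
    apply le_antisymm
    · exact csInf_le ⟨f x y0, by rintro _ ⟨y, hyY, rfl⟩; exact hy0 hyY⟩
        (mem_image_of_mem _ hy0Y)
    · exact le_csInf (hYne.image _) (by rintro _ ⟨y, hyY, rfl⟩; exact hy0 hyY)
  rw [this]; linarith

lemma Seps_compact (hY : IsCompact Y)
    (hf : Continuous fun p : EuclideanSpace ℝ (Fin n) × EuclideanSpace ℝ (Fin m) => f p.1 p.2)
    (x : EuclideanSpace ℝ (Fin n)) (ε : ℝ) : IsCompact (Seps f Y ε x) := by
  have hcx : Continuous (f x) := hf.comp (Continuous.prodMk_right x)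
  have : Seps f Y ε x = Y ∩ {y | f x y ≤ phi f Y x + ε} := rfl
  rw [this]
  exact hY.inter_right (isClosed_le hcx continuous_const)

lemma image_compact (hY : IsCompact Y)
    (hF : Continuous fun p : EuclideanSpace ℝ (Fin n) × EuclideanSpace ℝ (Fin m) => F p.1 p.2)
    (hf : Continuous fun p : EuclideanSpace ℝ (Fin n) × EuclideanSpace ℝ (Fin m) => f p.1 p.2)
    (x : EuclideanSpace ℝ (Fin n)) (ε : ℝ) : IsCompact (F x '' Seps f Y ε x) :=
  (Seps_compact hY hf x ε).image (hF.comp (Continuous.prodMk_right x))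

/-- the pessimistic value is attained -/
lemma psiP_mem (hYne : Y.Nonempty) (hY : IsCompact Y)
    (hF : Continuous fun p : EuclideanSpace ℝ (Fin n) × EuclideanSpace ℝ (Fin m) => F p.1 p.2)
    (hf : Continuous fun p : EuclideanSpace ℝ (Fin n) × EuclideanSpace ℝ (Fin m) => f p.1 p.2)
    (x : EuclideanSpace ℝ (Fin n)) {ε : ℝ} (hε : 0 ≤ ε) :
    psiP F f Y ε x ∈ F x '' Seps f Y ε x :=
  (image_compact hY hF hf x ε).sSup_mem ((Seps_nonempty hYne hY hf x hε).image _)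

lemma psiO_mem (hYne : Y.Nonempty) (hY : IsCompact Y)
    (hF : Continuous fun p : EuclideanSpace ℝ (Fin n) × EuclideanSpace ℝ (Fin m) => F p.1 p.2)
    (hf : Continuous fun p : EuclideanSpace ℝ (Fin n) × EuclideanSpace ℝ (Fin m) => f p.1 p.2)
    (x : EuclideanSpace ℝ (Fin n)) {ε : ℝ} (hε : 0 ≤ ε) :
    psiO F f Y ε x ∈ F x '' Seps f Y ε x :=
  (image_compact hY hF hf x ε).sInf_mem ((Seps_nonempty hYne hY hf x hε).image _)

lemma le_psiP (hY : IsCompact Y)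
    (hF : Continuous fun p : EuclideanSpace ℝ (Fin n) × EuclideanSpace ℝ (Fin m) => F p.1 p.2)
    (hf : Continuous fun p : EuclideanSpace ℝ (Fin n) × EuclideanSpace ℝ (Fin m) => f p.1 p.2)
    (x : EuclideanSpace ℝ (Fin n)) (ε : ℝ) {y : EuclideanSpace ℝ (Fin m)}
    (hy : y ∈ Seps f Y ε x) : F x y ≤ psiP F f Y ε x :=
  le_csSup (image_compact hY hF hf x ε).bddAbove (mem_image_of_mem _ hy)

lemma psiO_le (hY : IsCompact Y)
    (hF : Continuous fun p : EuclideanSpace ℝ (Fin n) × EuclideanSpace ℝ (Fin m) => F p.1 p.2)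
    (hf : Continuous fun p : EuclideanSpace ℝ (Fin n) × EuclideanSpace ℝ (Fin m) => f p.1 p.2)
    (x : EuclideanSpace ℝ (Fin n)) (ε : ℝ) {y : EuclideanSpace ℝ (Fin m)}
    (hy : y ∈ Seps f Y ε x) : psiO F f Y ε x ≤ F x y :=
  csInf_le (image_compact hY hF hf x ε).bddBelow (mem_image_of_mem _ hy)

end Aux

theorem stmt10 {n m : ℕ}
    (X : Set (EuclideanSpace ℝ (Fin n))) (Y : Set (EuclideanSpace ℝ (Fin m)))
    (hXne : X.Nonempty) (hX : IsCompact X) (hYne : Y.Nonempty) (hY : IsCompact Y)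
    (F f : EuclideanSpace ℝ (Fin n) → EuclideanSpace ℝ (Fin m) → ℝ)
    (hF : Continuous fun p : EuclideanSpace ℝ (Fin n) × EuclideanSpace ℝ (Fin m) => F p.1 p.2)
    (hf : Continuous fun p : EuclideanSpace ℝ (Fin n) × EuclideanSpace ℝ (Fin m) => f p.1 p.2) :
    ∀ (xk : ℕ → EuclideanSpace ℝ (Fin n)) (εk : ℕ → ℝ)
      (x : EuclideanSpace ℝ (Fin n)) (ε : ℝ),
      (∀ k, xk k ∈ X) → (∀ k, 0 ≤ εk k) → x ∈ X → 0 ≤ ε →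
      Tendsto xk atTop (nhds x) → Tendsto εk atTop (nhds ε) →
      Filter.limsup (fun k => Delta F f Y (εk k) (xk k)) atTop ≤ Delta F f Y ε x := by
  intro xk εk x ε hxkX hεk hxX hε hxk hεkl
  -- a uniform bound on F over X × Y
  obtain ⟨C, hC⟩ : ∃ C, ∀ p ∈ X ×ˢ Y, |F p.1 p.2| ≤ C := by
    obtain ⟨C, hC⟩ := ((hX.prod hY).image hF.norm).bddAbove
    exact ⟨C, fun p hp => hC (mem_image_of_mem _ hp)⟩
  have hbd : ∀ k, 0 ≤ Delta F f Y (εk k) (xk k) := by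
    intro k
    obtain ⟨yP, hyP, hyPeq⟩ := psiP_mem hYne hY hF hf (xk k) (hεk k)
    have h1 : psiO F f Y (εk k) (xk k) ≤ F (xk k) yP := psiO_le hY hF hf _ _ hyP
    simp only [Delta, ← hyPeq]
    linarith
  have hcob : IsCoboundedUnder (· ≤ ·) atTop (fun k => Delta F f Y (εk k) (xk k)) :=
    Filter.isCoboundedUnder_le_of_le atTop hbd
  -- reduce to: for every δ > 0, eventually Δ_k ≤ Δ + δ
  refine le_of_forall_pos_le_add fun δ hδ => ?_
  refine Filter.limsup_le_of_le hcob ?_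
  by_contra hcon
  rw [Filter.not_eventually] at hcon
  have hcon' : ∃ᶠ k in atTop, Delta F f Y ε x + δ < Delta F f Y (εk k) (xk k) := by
    refine hcon.mono fun k hk => ?_; linarith [not_le.mp hk]
  obtain ⟨g, hg, hgP⟩ := Filter.extraction_of_frequently_atTop hcon'
  -- pick maximizers and minimizers along the subsequence
  have hmax : ∀ j : ℕ, ∃ y ∈ Seps f Y (εk (g j)) (xk (g j)),
      F (xk (g j)) y = psiP F f Y (εk (g j)) (xk (g j)) := by
    intro j
    obtain ⟨y, hy, hyeq⟩ := psiP_mem hYne hY hF hf (xk (g j)) (hεk (g j))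
    exact ⟨y, hy, hyeq⟩
  have hmin : ∀ j : ℕ, ∃ y ∈ Seps f Y (εk (g j)) (xk (g j)),
      F (xk (g j)) y = psiO F f Y (εk (g j)) (xk (g j)) := by
    intro j
    obtain ⟨y, hy, hyeq⟩ := psiO_mem hYne hY hF hf (xk (g j)) (hεk (g j))
    exact ⟨y, hy, hyeq⟩
  choose yP hyPS hyPeq using hmax
  choose yO hyOS hyOeq using hmin
  -- extract convergent subsequences
  obtain ⟨ybar, hybarY, φ1, hφ1, hyPtend⟩ := hY.tendsto_subseq (fun j => (hyPS j).1)
  obtain ⟨zbar, hzbarY, φ2, hφ2, hyOtend⟩ :=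
    hY.tendsto_subseq (fun j => (hyOS (φ1 j)).1)
  set h : ℕ → ℕ := fun j => g (φ1 (φ2 j)) with hh
  have hhmono : StrictMono h := hg.comp (hφ1.comp hφ2)
  have hhtop : Tendsto h atTop atTop := hhmono.tendsto_atTop
  have hxh : Tendsto (fun j => xk (h j)) atTop (nhds x) := hxk.comp hhtop
  have hεh : Tendsto (fun j => εk (h j)) atTop (nhds ε) := hεkl.comp hhtop
  have hyPh : Tendsto (fun j => yP (φ1 (φ2 j))) atTop (nhds ybar) := hyPtend.comp hφ2.tendsto_atTop
  have hyOh : Tendsto (fun j => yO (φ1 (φ2 j))) atTop (nhds zbar) := hyOtend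
  have hφcont : Continuous (phi f Y) := phi_continuous hY hf
  -- limit points belong to S_ε(x)
  have hmemS : ∀ (w : ℕ → EuclideanSpace ℝ (Fin m)) (wbar : EuclideanSpace ℝ (Fin m)),
      (∀ j, w j ∈ Seps f Y (εk (h j)) (xk (h j))) →
      Tendsto w atTop (nhds wbar) → wbar ∈ Y → wbar ∈ Seps f Y ε x := by
    intro w wbar hwS hwt hwY
    refine ⟨hwY, ?_⟩
    have h1 : Tendsto (fun j => f (xk (h j)) (w j)) atTop (nhds (f x wbar)) :=
      (hf.tendsto (x, wbar)).comp (hxh.prodMk_nhds hwt)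
    have h2 : Tendsto (fun j => phi f Y (xk (h j)) + εk (h j)) atTop
        (nhds (phi f Y x + ε)) :=
      ((hφcont.tendsto x).comp hxh).add hεh
    exact le_of_tendsto_of_tendsto' h1 h2 fun j => (hwS j).2
  have hybarS : ybar ∈ Seps f Y ε x :=
    hmemS _ _ (fun j => hyPS (φ1 (φ2 j))) hyPh hybarY
  have hzbarS : zbar ∈ Seps f Y ε x :=
    hmemS _ _ (fun j => hyOS (φ1 (φ2 j))) hyOh hzbarY
  -- limit of Δ along the subsequence
  have hFP : Tendsto (fun j => F (xk (h j)) (yP (φ1 (φ2 j)))) atTop (nhds (F x ybar)) :=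
    (hF.tendsto (x, ybar)).comp (hxh.prodMk_nhds hyPh)
  have hFO : Tendsto (fun j => F (xk (h j)) (yO (φ1 (φ2 j)))) atTop (nhds (F x zbar)) :=
    (hF.tendsto (x, zbar)).comp (hxh.prodMk_nhds hyOh)
  have hDel : Tendsto (fun j => Delta F f Y (εk (h j)) (xk (h j))) atTop
      (nhds (F x ybar - F x zbar)) := by
    have : ∀ j, Delta F f Y (εk (h j)) (xk (h j)) =
        F (xk (h j)) (yP (φ1 (φ2 j))) - F (xk (h j)) (yO (φ1 (φ2 j))) := by
      intro j
      simp only [Delta, ← hyPeq (φ1 (φ2 j)), ← hyOeq (φ1 (φ2 j))]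
      exact congrArg₂ (· - ·) (hyPeq (φ1 (φ2 j))).symm (hyOeq (φ1 (φ2 j))).symm
    simp only [this]
    exact hFP.sub hFO
  have hlb : Delta F f Y ε x + δ ≤ F x ybar - F x zbar :=
    le_of_tendsto_of_tendsto' tendsto_const_nhds hDel fun j => (hgP (φ1 (φ2 j))).le
  have hub : F x ybar - F x zbar ≤ Delta F f Y ε x :=
    sub_le_sub (le_psiP hY hF hf x ε hybarS) (psiO_le hY hF hf x ε hzbarS)
  linarith
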